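/- Let F(x,y) = x·y·(x^10 − 11x^5y^5 − y^10), H(x,y) = x^20 + 228x^15y^5 + 494x^10y^10 − 228x^5y^15 + y^20, and T(x,y) = x^30 − 522x^25y^5 − 10005x^20y^10 − 10005x^10y^20 + 522x^5y^25 + y^30 in ℂ[x,y]. Then the three degree-31 equivariant maps T·(x,y), H·(F_y, −F_x), and F·(H_y, −H_x) satisfy the linear relation 5·T·(x,y) − 5·H·(F_y(x,y), −F_x(x,y)) + 3·F·(H_y(x,y), −H_x(x,y)) = (0, 0), i.e., both component polynomials vanish identically: 5·T·x − 5·H·F_y + 3·F·H_y = 0 and 5·T·y + 5·H·F_x − 3·F·H_x = 0. -/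
import Mathlib


open MvPolynomial

/-- Klein's degree-12 icosahedral form `F(x,y) = x·y·(x^10 − 11x^5y^5 − y^10)`. -/
noncomputable def F : MvPolynomial (Fin 2) ℂ :=
  X 0 * X 1 * ((X 0) ^ 10 - 11 * (X 0) ^ 5 * (X 1) ^ 5 - (X 1) ^ 10)

/-- Klein's degree-20 icosahedral form `H`. -/
noncomputable def H : MvPolynomial (Fin 2) ℂ :=
  (X 0) ^ 20 + 228 * (X 0) ^ 15 * (X 1) ^ 5 + 494 * (X 0) ^ 10 * (X 1) ^ 10
    - 228 * (X 0) ^ 5 * (X 1) ^ 15 + (X 1) ^ 20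

/-- Klein's degree-30 icosahedral form `T`. -/
noncomputable def T : MvPolynomial (Fin 2) ℂ :=
  (X 0) ^ 30 - 522 * (X 0) ^ 25 * (X 1) ^ 5 - 10005 * (X 0) ^ 20 * (X 1) ^ 10
    - 10005 * (X 0) ^ 10 * (X 1) ^ 20 + 522 * (X 0) ^ 5 * (X 1) ^ 25 + (X 1) ^ 30


lemma pderiv_ofNat (i : Fin 2) (n : ℕ) [n.AtLeastTwo] :
    pderiv i (no_index (OfNat.ofNat n) : MvPolynomial (Fin 2) ℂ) = 0 := by
  rw [← map_ofNat (C : ℂ →+* MvPolynomial (Fin 2) ℂ) n, pderiv_C]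

/-- The relation `5·T·(x,y) − 5·H·(F_y, −F_x) + 3·F·(H_y, −H_x) = (0,0)` among the three
degree-31 equivariant maps, stated componentwise. -/
theorem degree_31_equivariant_relation :
    5 * T * X 0 - 5 * H * pderiv 1 F + 3 * F * pderiv 1 H = 0 ∧
    5 * T * X 1 + 5 * H * pderiv 0 F - 3 * F * pderiv 0 H = 0 := by
  constructor <;>
  · simp only [F, H, T, map_add, map_sub, map_mul, pderiv_X, pderiv_pow, map_pow,
      Derivation.leibniz, Derivation.leibniz_pow, pderiv_C, pderiv_ofNat, smul_eq_mul,
      map_ofNat, Pi.single_eq_same, Pi.single_eq_of_ne (by decide : (0:Fin 2) ≠ 1),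
      Pi.single_eq_of_ne (by decide : (1:Fin 2) ≠ 0)]
    ring
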